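/- arXiv:1709.05610 — 4 statements merged into one kernel-verified Lean document; each statement's English description precedes it below -/
import Mathlib

section
/- Let A, η ∈ C²(ℝ) be strictly convex, q' = η'A'. Define for u_L ≠ u_R: Λ := q(u_R) - q(u_L) - σ(η(u_R) - η(u_L)), where σ = (A(u_R)-A(u_L))/(u_R-u_L). Then Λ = (1/(2(u_R - u_L))) ∬_{I×I} (η'(u) - η'(v))(A'(u) - A'(v)) dv du, where I is the closed interval with endpoints u_L and u_R. -/
/-!
Expanding the product, the double integral of `(f u - f v) * (g u - g v)` over `I × I` equals
`2 (|I| ∫ f g - ∫ f ∫ g)`. For `f = η'`, `g = A'` the three integrals are, by the fundamental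
theorem of calculus, `q(u_R) - q(u_L)`, `η(u_R) - η(u_L)` and `A(u_R) - A(u_L)`, each multiplied
by the orientation sign of `u_R - u_L`; that sign also relates `|I|` to `u_R - u_L`, and it cancels
because it enters every term squared.
-/

open MeasureTheory Set

theorem integral_integral_sub_mul_sub {α : Type*} [MeasurableSpace α] {μ : Measure α}
    [IsFiniteMeasure μ] {f g : α → ℝ} (hf : Integrable f μ) (hg : Integrable g μ)
    (hfg : Integrable (fun x => f x * g x) μ) :
    ∫ u, ∫ v, (f u - f v) * (g u - g v) ∂μ ∂μ =
      2 * (μ.real univ * ∫ x, f x * g x ∂μ - (∫ x, f x ∂μ) * ∫ x, g x ∂μ) := by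
  have inner (u : α) : ∫ v, (f u - f v) * (g u - g v) ∂μ =
      μ.real univ * (f u * g u) - f u * ∫ x, g x ∂μ - (∫ x, f x ∂μ) * g u
        + ∫ x, f x * g x ∂μ := by
    have expand : (fun v => (f u - f v) * (g u - g v)) =
        fun v => f u * g u - f u * g v - f v * g u + f v * g v := by
      funext v; ring
    rw [expand, integral_add _ hfg, integral_sub _ (hf.mul_const _), integral_sub,
      integral_const, integral_const_mul, integral_mul_const, smul_eq_mul]
    all_goals fun_prop
  simp_rw [inner]
  rw [integral_add _ (integrable_const _), integral_sub _ (hg.const_mul _), integral_sub,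
    integral_const, integral_const_mul, integral_mul_const, integral_const_mul, smul_eq_mul]
  · ring
  all_goals fun_prop

theorem setIntegral_uIcc_eq_intervalIntegral (f : ℝ → ℝ) (a b : ℝ) :
    ∫ x in uIcc a b, f x = (if a ≤ b then 1 else -1) * ∫ x in a..b, f x := by
  rw [intervalIntegral.intervalIntegral_eq_integral_uIoc, uIcc, uIoc,
    integral_Icc_eq_integral_Ioc]
  split_ifs <;> simp

instance isFiniteMeasure_restrict_uIcc (a b : ℝ) : IsFiniteMeasure (volume.restrict (uIcc a b)) :=
  Real.isFiniteMeasure_restrict_Icc _ _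

theorem volume_real_uIcc (a b : ℝ) :
    volume.real (uIcc a b) = (if a ≤ b then 1 else -1) * (b - a) := by
  simpa using setIntegral_uIcc_eq_intervalIntegral (fun _ => 1) a b

theorem setIntegral_uIcc_eq_sub_of_hasDerivAt {F f : ℝ → ℝ} {a b : ℝ}
    (hF : ∀ x ∈ uIcc a b, HasDerivAt F (f x) x) (hf : IntervalIntegrable f volume a b) :
    ∫ x in uIcc a b, f x = (if a ≤ b then 1 else -1) * (F b - F a) := by
  rw [setIntegral_uIcc_eq_intervalIntegral, intervalIntegral.integral_eq_sub_of_hasDerivAt hF hf]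

theorem stmt_1_general (A η q : ℝ → ℝ)
    (hA : ContDiff ℝ 2 A)
    (hη : ContDiff ℝ 2 η)
    (hqd : Differentiable ℝ q)
    (hq : ∀ u, deriv q u = deriv η u * deriv A u)
    (uL uR σ : ℝ) (hne : uL ≠ uR)
    (hσ : σ = (A uR - A uL) / (uR - uL)) :
    q uR - q uL - σ * (η uR - η uL) =
      (1 / (2 * (uR - uL))) *
        ∫ u in Set.uIcc uL uR, ∫ v in Set.uIcc uL uR,
          (deriv η u - deriv η v) * (deriv A u - deriv A v) := by
  have hη' : Continuous (deriv η) := hη.continuous_deriv one_le_two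
  have hA' : Continuous (deriv A) := hA.continuous_deriv one_le_two
  have ftc {F : ℝ → ℝ} (hF : ContDiff ℝ 2 F) :=
    setIntegral_uIcc_eq_sub_of_hasDerivAt (a := uL) (b := uR)
      (fun x _ => (hF.differentiable two_ne_zero).differentiableAt.hasDerivAt)
      ((hF.continuous_deriv one_le_two).intervalIntegrable _ _)
  have ftc_q := setIntegral_uIcc_eq_sub_of_hasDerivAt (a := uL) (b := uR)
    (f := fun u => deriv η u * deriv A u)
    (fun x _ => hq x ▸ hqd.differentiableAt.hasDerivAt)
    ((hη'.mul hA').intervalIntegrable _ _)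
  rw [integral_integral_sub_mul_sub hη'.integrableOn_uIcc hA'.integrableOn_uIcc
      (hη'.mul hA').integrableOn_uIcc, measureReal_restrict_apply_univ, volume_real_uIcc,
    ftc hη, ftc hA, ftc_q, hσ]
  have hsign : (if uL ≤ uR then 1 else -1 : ℝ) ^ 2 = 1 := by split_ifs <;> norm_num
  have hne' : uR - uL ≠ 0 := sub_ne_zero.mpr hne.symm
  field_simp
  linear_combination ((A uR - A uL) * (η uR - η uL) - (q uR - q uL) * (uR - uL)) * hsign

theorem stmt_1 (A η q : ℝ → ℝ)
    (hA : ContDiff ℝ 2 A) (hAc : StrictConvexOn ℝ Set.univ A)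
    (hη : ContDiff ℝ 2 η) (hηc : StrictConvexOn ℝ Set.univ η)
    (hqd : Differentiable ℝ q)
    (hq : ∀ u, deriv q u = deriv η u * deriv A u)
    (uL uR σ : ℝ) (hne : uL ≠ uR)
    (hσ : σ = (A uR - A uL) / (uR - uL)) :
    q uR - q uL - σ * (η uR - η uL) =
      (1 / (2 * (uR - uL))) *
        ∫ u in Set.uIcc uL uR, ∫ v in Set.uIcc uL uR,
          (deriv η u - deriv η v) * (deriv A u - deriv A v) :=
  stmt_1_general A η q hA hη hqd hq uL uR σ hne hσ
end

section
/- Let η ∈ C² be strictly convex with η'' > 0 and let A be strictly convex. If u_L > u_R and u ∈ ℝ satisfies η(u|u_L) = η(u|u_R), then q(u;u_R) - q(u;u_L) < 0, where η(a|b) := η(a) - η(b) - η'(b)(a-b) is the relative entropy and q(a;b) := q(a) - q(b) - η'(b)(A(a) - A(b)) is the relative entropy flux. -/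
/-!
With `u` fixed, `v ↦ q(u;v) - A'(u) η(u|v)` has derivative `η''(v) A(v|u)`, where `A(v|u)` is the
gap between `A` and its tangent line at `u`. By strict convexity of `A` this vanishes only at
`v = u`, so the function is strictly increasing. Comparing its values at `u_R < u_L`, the
relative-entropy terms cancel by hypothesis, leaving `q(u;u_R) < q(u;u_L)`.
-/

open Set

noncomputable section

def relEntropy (η : ℝ → ℝ) (a b : ℝ) : ℝ := η a - η b - deriv η b * (a - b)

def relEntropyFlux (η A q : ℝ → ℝ) (a b : ℝ) : ℝ := q a - q b - deriv η b * (A a - A b)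

end

lemma StrictConvexOn.relEntropy_pos {f : ℝ → ℝ} {S : Set ℝ} (hf : StrictConvexOn ℝ S f)
    {a b : ℝ} (ha : a ∈ S) (hb : b ∈ S) (hab : a ≠ b) (hfd : DifferentiableAt ℝ f b) :
    0 < relEntropy f a b := by
  rw [relEntropy]
  rcases hab.lt_or_gt with hab | hab
  · have h := hf.slope_lt_deriv ha hb hab hfd
    rw [slope_def_field, div_lt_iff₀ (sub_pos.2 hab)] at h
    linarith
  · have h := hf.deriv_lt_slope hb ha hab hfd
    rw [slope_def_field, lt_div_iff₀ (sub_pos.2 hab)] at h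
    linarith

lemma strictMono_of_deriv_pos_of_ne {f : ℝ → ℝ} {c : ℝ} (hf : Continuous f)
    (hf' : ∀ x, x ≠ c → 0 < deriv f x) : StrictMono f := by
  refine StrictMonoOn.Iic_union_Ici (a := c) ?_ ?_
  · refine strictMonoOn_of_deriv_pos (convex_Iic c) hf.continuousOn fun x hx => hf' x ?_
    rw [interior_Iic] at hx
    exact hx.ne
  · refine strictMonoOn_of_deriv_pos (convex_Ici c) hf.continuousOn fun x hx => hf' x ?_
    rw [interior_Ici] at hx
    exact hx.ne'

lemma hasDerivAt_relEntropyFlux_sub_relEntropy {η A q : ℝ → ℝ} {u v η'' : ℝ}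
    (hη : DifferentiableAt ℝ η v) (hη' : HasDerivAt (deriv η) η'' v)
    (hA : DifferentiableAt ℝ A v) (hq : HasDerivAt q (deriv η v * deriv A v) v) :
    HasDerivAt (fun w => relEntropyFlux η A q u w - deriv A u * relEntropy η u w)
      (η'' * relEntropy A v u) v := by
  have hflux := ((hasDerivAt_const v (q u)).sub hq).sub
    (hη'.mul ((hasDerivAt_const v (A u)).sub hA.hasDerivAt))
  have hentropy := (((hasDerivAt_const v (η u)).sub hη.hasDerivAt).sub
    (hη'.mul ((hasDerivAt_const v u).sub (hasDerivAt_id v)))).const_mul (deriv A u)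
  refine (hflux.sub hentropy).congr_deriv ?_
  simp only [relEntropy, Pi.sub_apply, id]
  ring

theorem stmt_3_general (A η q : ℝ → ℝ)
    (hA : ContDiff ℝ 2 A) (hAc : StrictConvexOn ℝ Set.univ A)
    (hη : ContDiff ℝ 2 η) (hηpos : ∀ u, 0 < deriv (deriv η) u)
    (hqd : Differentiable ℝ q)
    (hq : ∀ u, deriv q u = deriv η u * deriv A u)
    (uL uR u : ℝ) (hlt : uR < uL)
    (heq : η u - η uL - deriv η uL * (u - uL) = η u - η uR - deriv η uR * (u - uR)) :
    (q u - q uR - deriv η uR * (A u - A uR)) -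
      (q u - q uL - deriv η uL * (A u - A uL)) < 0 := by
  have hAd : Differentiable ℝ A := hA.differentiable (by norm_num)
  have hηd : Differentiable ℝ η := hη.differentiable (by norm_num)
  have hη'd : Differentiable ℝ (deriv η) := hη.differentiable_deriv_two
  set H : ℝ → ℝ := fun w => relEntropyFlux η A q u w - deriv A u * relEntropy η u w
  have hH : ∀ v, HasDerivAt H (deriv (deriv η) v * relEntropy A v u) v := fun v =>
    hasDerivAt_relEntropyFlux_sub_relEntropy (hηd v) (hη'd v).hasDerivAt (hAd v)
      (hq v ▸ (hqd v).hasDerivAt)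
  have hHmono : StrictMono H := by
    refine strictMono_of_deriv_pos_of_ne (c := u)
      (continuous_iff_continuousAt.2 fun v => (hH v).continuousAt) fun v hv => ?_
    rw [(hH v).deriv]
    exact mul_pos (hηpos v) (hAc.relEntropy_pos (mem_univ v) (mem_univ u) hv (hAd u))
  have hHlt : H uR < H uL := hHmono hlt
  simp only [H, relEntropyFlux, relEntropy] at hHlt
  linear_combination hHlt - deriv A u * heq

theorem stmt_3 (A η q : ℝ → ℝ)
    (hA : ContDiff ℝ 2 A) (hAc : StrictConvexOn ℝ Set.univ A)
    (hη : ContDiff ℝ 2 η) (hηpos : ∀ u, 0 < deriv (deriv η) u)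
    (hηc : StrictConvexOn ℝ Set.univ η)
    (hqd : Differentiable ℝ q)
    (hq : ∀ u, deriv q u = deriv η u * deriv A u)
    (uL uR u : ℝ) (hlt : uR < uL)
    (heq : η u - η uL - deriv η uL * (u - uL) = η u - η uR - deriv η uR * (u - uR)) :
    (q u - q uR - deriv η uR * (A u - A uR)) -
      (q u - q uL - deriv η uL * (A u - A uL)) < 0 :=
  stmt_3_general A η q hA hAc hη hηpos hqd hq uL uR u hlt heq
end

section
/- Define, for ε > 0 and u_L ≥ u_R, V_ε(u, u_L, u_R) := [q(u;u_R) - q(u;u_L) - ε]_+ / (η(u|u_R) - η(u|u_L)) if η(u|u_R) ≠ η(u|u_L), and 0 otherwise, where [x]_+ = max(0,x). Then |V_ε(u, u_L, u_R)| ≤ |A'(u)| for all such (u, u_L, u_R). -/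
/-!
Write `η(u|v)` and `q(u;v)` for the relative entropy and entropy flux. For fixed `u`,
`Φ(v) = q(u;v) - A'(u) η(u|v)` has derivative `η''(v) (A(v) - A(u) - A'(u)(v - u))`, which is
nonnegative by convexity of `η` and `A`. Hence `Φ(u_R) ≤ Φ(u_L)`, i.e.
`q(u;u_R) - q(u;u_L) ≤ A'(u) (η(u|u_R) - η(u|u_L))`, and the bound on `V_ε` follows
since cutting off at `0` after subtracting `ε > 0` only lowers the numerator.
-/

open Set

lemma ConvexOn.add_deriv_mul_sub_le {f : ℝ → ℝ} (hf : ConvexOn ℝ univ f)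
    (hd : Differentiable ℝ f) (x y : ℝ) : f x + deriv f x * (y - x) ≤ f y := by
  rcases lt_trichotomy x y with hxy | rfl | hyx
  · have hslope := hf.deriv_le_slope (mem_univ x) (mem_univ y) hxy (hd x)
    rw [slope_def_field, le_div_iff₀ (sub_pos.mpr hxy)] at hslope
    linarith
  · simp
  · have hslope := hf.slope_le_deriv (mem_univ y) (mem_univ x) hyx (hd x)
    rw [slope_def_field, div_le_iff₀ (sub_pos.mpr hyx)] at hslope
    linarith

lemma hasDerivAt_relEntropy_right {η : ℝ → ℝ} {η₂ : ℝ} (a : ℝ) {b : ℝ}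
    (hη : DifferentiableAt ℝ η b) (hη' : HasDerivAt (deriv η) η₂ b) :
    HasDerivAt (relEntropy η a) (-η₂ * (a - b)) b := by
  have h : HasDerivAt (relEntropy η a) _ b :=
    ((hasDerivAt_const b (η a)).sub hη.hasDerivAt).sub
      (hη'.mul ((hasDerivAt_const b a).sub (hasDerivAt_id b)))
  exact h.congr_deriv (by ring)

lemma hasDerivAt_relEntropyFlux_right {η A q : ℝ → ℝ} {η₂ A' : ℝ} (a : ℝ) {b : ℝ}
    (hA : HasDerivAt A A' b) (hq : HasDerivAt q (deriv η b * A') b)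
    (hη' : HasDerivAt (deriv η) η₂ b) :
    HasDerivAt (relEntropyFlux η A q a) (-η₂ * (A a - A b)) b := by
  have h : HasDerivAt (relEntropyFlux η A q a) _ b :=
    ((hasDerivAt_const b (q a)).sub hq).sub (hη'.mul ((hasDerivAt_const b (A a)).sub hA))
  exact h.congr_deriv (by ring)

lemma monotone_relEntropyFlux_sub_mul_relEntropy {η A q : ℝ → ℝ}
    (hA : Differentiable ℝ A) (hAc : ConvexOn ℝ univ A)
    (hη : Differentiable ℝ η) (hη' : Differentiable ℝ (deriv η)) (hηc : ConvexOn ℝ univ η)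
    (hq : ∀ v, HasDerivAt q (deriv η v * deriv A v) v) (u : ℝ) :
    Monotone fun v => relEntropyFlux η A q u v - deriv A u * relEntropy η u v := by
  have hderiv : ∀ v,
      HasDerivAt (fun v => relEntropyFlux η A q u v - deriv A u * relEntropy η u v)
        (deriv (deriv η) v * (A v - (A u + deriv A u * (v - u)))) v := fun v => by
    have h :=
      (hasDerivAt_relEntropyFlux_right u (hA v).hasDerivAt (hq v) (hη' v).hasDerivAt).sub
        ((hasDerivAt_relEntropy_right u (hη v) (hη' v).hasDerivAt).const_mul (deriv A u))
    exact h.congr_deriv (by ring)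
  refine monotone_of_deriv_nonneg (fun v => (hderiv v).differentiableAt) fun v => ?_
  have hη'_mono : Monotone (deriv η) :=
    monotoneOn_univ.mp (hηc.monotoneOn_deriv fun x _ => hη x)
  rw [(hderiv v).deriv]
  exact mul_nonneg hη'_mono.deriv_nonneg (sub_nonneg.mpr (hAc.add_deriv_mul_sub_le hA u v))

lemma abs_ite_max_sub_div_le {N D a ε : ℝ} (hε : 0 ≤ ε) (hND : N ≤ a * D) :
    |if D = 0 then 0 else max 0 (N - ε) / D| ≤ |a| := by
  split_ifs with hD
  · simp
  rw [abs_div, div_le_iff₀ (abs_pos.mpr hD), abs_of_nonneg (le_max_left _ _), ← abs_mul]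
  exact max_le (abs_nonneg _) (by linarith [le_abs_self (a * D)])

theorem stmt_12 (A η q : ℝ → ℝ)
    (hA : ContDiff ℝ 2 A) (hAc : StrictConvexOn ℝ Set.univ A)
    (hη : ContDiff ℝ 2 η) (hηc : StrictConvexOn ℝ Set.univ η)
    (hqd : Differentiable ℝ q)
    (hq : ∀ u, deriv q u = deriv η u * deriv A u)
    (ε : ℝ) (hε : 0 < ε)
    (u uL uR : ℝ) (h : uR ≤ uL) :
    |(if (η u - η uR - deriv η uR * (u - uR)) -
            (η u - η uL - deriv η uL * (u - uL)) = 0 then (0 : ℝ)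
      else
        max 0 ((q u - q uR - deriv η uR * (A u - A uR)) -
            (q u - q uL - deriv η uL * (A u - A uL)) - ε) /
          ((η u - η uR - deriv η uR * (u - uR)) -
            (η u - η uL - deriv η uL * (u - uL))))| ≤ |deriv A u| := by
  have hmono := monotone_relEntropyFlux_sub_mul_relEntropy (hA.differentiable two_ne_zero)
    hAc.convexOn (hη.differentiable two_ne_zero) hη.differentiable_deriv_two hηc.convexOn
    (fun v => hq v ▸ (hqd v).hasDerivAt) u h
  refine abs_ite_max_sub_div_le hε.le ?_
  simp only [relEntropy, relEntropyFlux] at hmono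
  linarith
end

section
/- For every f ∈ L²([-M,M]) and ε > 0 there exists f_ε : ℝ → ℝ that is piecewise Lipschitz with finitely many discontinuity points x₁ < ⋯ < x_N, all contained in (-M,M), nondecreasing on each interval between consecutive discontinuities, with left limit ≥ right limit at each discontinuity, such that ‖f - f_ε‖_{L²([-M,M])} < ε and ‖f_ε‖_{L^∞(ℝ)} ≤ ‖f‖_{L^∞([-M,M])}. -/
/-!
Approximate `f` in `L²` by a continuous `g`. On a uniform grid of mesh `δ` over `[-M, M]`,
replace `g` on each cell by the line of slope `η / (2δ)` starting at the value of `g` at the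
left end of the cell: it rises by `η / 2` across the cell, which by uniform continuity exceeds
the value of `g` at the next grid point, so every jump is downward, and the result is
uniformly `η`-close to `g`. Finally clamp to `[-‖f‖_∞, ‖f‖_∞]`: the clamp is monotone and
`1`-Lipschitz, so it keeps the sawtooth shape, and it moves every value towards `f x` for
almost every `x`, so it does not increase the `L²` error.
-/

open MeasureTheory Set Filter Topology
open scoped NNReal ENNReal

structure IsSawtooth (I : Set ℝ) (F : ℝ → ℝ) {N : ℕ} (xs llim rlim : Fin N → ℝ) : Prop where
  strictMono : StrictMono xs
  mem : ∀ i, xs i ∈ I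
  monotoneOn : ∀ u v, (∀ i, xs i ∉ Ioo u v) → MonotoneOn F (Ioo u v)
  lipschitzOn : ∀ u v, (∀ i, xs i ∉ Ioo u v) → ∃ L, LipschitzOnWith L F (Ioo u v)
  tendsto_left : ∀ i, Tendsto F (𝓝[<] xs i) (𝓝 (llim i))
  tendsto_right : ∀ i, Tendsto F (𝓝[>] xs i) (𝓝 (rlim i))
  right_le_left : ∀ i, rlim i ≤ llim i

theorem IsSawtooth.comp {I : Set ℝ} {F c : ℝ → ℝ} {N : ℕ} {xs llim rlim : Fin N → ℝ}
    (hF : IsSawtooth I F xs llim rlim) (hc : Monotone c) {K : ℝ≥0} (hcL : LipschitzWith K c) :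
    IsSawtooth I (c ∘ F) xs (c ∘ llim) (c ∘ rlim) where
  strictMono := hF.strictMono
  mem := hF.mem
  monotoneOn u v h := hc.comp_monotoneOn (hF.monotoneOn u v h)
  lipschitzOn u v h :=
    let ⟨L, hL⟩ := hF.lipschitzOn u v h
    ⟨K * L, hcL.comp_lipschitzOnWith hL⟩
  tendsto_left i := (hcL.continuous.tendsto _).comp (hF.tendsto_left i)
  tendsto_right i := (hcL.continuous.tendsto _).comp (hF.tendsto_right i)
  right_le_left i := hc (hF.right_le_left i)

noncomputable section Grid

variable {a δ : ℝ} {m : ℕ}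

/-- `x` lies in the cell `[a + k δ, a + (k + 1) δ)` with `k = gridIndex a δ m x`, except that
the first cell (`k = 0`) extends to `-∞` and the last one (`k = m`) to `+∞`. -/
def gridIndex (a δ : ℝ) (m : ℕ) (x : ℝ) : ℕ := min m ⌊(x - a) / δ⌋₊

def gridPoint (a δ : ℝ) (m : ℕ) (x : ℝ) : ℝ := a + gridIndex a δ m x * δ

def gridSawtooth (g : ℝ → ℝ) (a δ K : ℝ) (m : ℕ) (x : ℝ) : ℝ :=
  g (gridPoint a δ m x) + K * (x - gridPoint a δ m x)

theorem gridIndex_le (x : ℝ) : gridIndex a δ m x ≤ m := min_le_left _ _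

theorem gridIndex_mono (hδ : 0 < δ) : Monotone (gridIndex a δ m) := fun _ _ h =>
  min_le_min le_rfl (Nat.floor_le_floor (by gcongr))

theorem le_gridIndex_iff (hδ : 0 < δ) {k : ℕ} (hk : k ≠ 0) (hkm : k ≤ m) {x : ℝ} :
    k ≤ gridIndex a δ m x ↔ a + k * δ ≤ x := by
  rw [gridIndex, le_min_iff, Nat.le_floor_iff' hk, le_div_iff₀ hδ]
  constructor
  · rintro ⟨-, h⟩; linarith
  · intro h; exact ⟨hkm, by linarith⟩

theorem gridIndex_eq (hδ : 0 < δ) {k : ℕ} (hkm : k ≤ m) {x : ℝ} (hx₁ : a + k * δ ≤ x)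
    (hx₂ : x < a + (k + 1) * δ) : gridIndex a δ m x = k := by
  refine le_antisymm (not_lt.1 fun h => ?_) ?_
  · have := (le_gridIndex_iff hδ k.succ_ne_zero (h.trans_le (gridIndex_le x))).1 h
    push_cast at this
    linarith
  · rcases Nat.eq_zero_or_pos k with rfl | hk
    · exact Nat.zero_le _
    · exact (le_gridIndex_iff hδ hk.ne' hkm).2 hx₁

theorem gridPoint_eq (hδ : 0 < δ) {k : ℕ} (hkm : k ≤ m) {x : ℝ} (hx₁ : a + k * δ ≤ x)
    (hx₂ : x < a + (k + 1) * δ) : gridPoint a δ m x = a + k * δ := by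
  rw [gridPoint, gridIndex_eq hδ hkm hx₁ hx₂]

theorem gridPoint_mem_Icc (hδ : 0 < δ) (x : ℝ) : gridPoint a δ m x ∈ Icc a (a + m * δ) := by
  have : (gridIndex a δ m x : ℝ) ≤ m := by exact_mod_cast gridIndex_le x
  constructor <;> simp only [gridPoint] <;> nlinarith

theorem gridPoint_le_self (hδ : 0 < δ) {x : ℝ} (hx : a ≤ x) : gridPoint a δ m x ≤ x := by
  have h₁ : (gridIndex a δ m x : ℝ) ≤ (x - a) / δ :=
    (Nat.cast_le.2 (min_le_right _ _)).trans (Nat.floor_le (div_nonneg (by linarith) hδ.le))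
  rw [le_div_iff₀ hδ] at h₁
  rw [gridPoint]; linarith

theorem self_le_gridPoint_add (hδ : 0 < δ) {x : ℝ} (hx : x ≤ a + (m + 1) * δ) :
    x ≤ gridPoint a δ m x + δ := by
  rcases (gridIndex_le (a := a) (δ := δ) x).lt_or_eq with h | h
  · have := (le_gridIndex_iff (a := a) (x := x) hδ (gridIndex a δ m x).succ_ne_zero h).not.1
      (by omega)
    push_cast at this
    rw [gridPoint]; linarith
  · rw [gridPoint, h]; linarith

theorem gridPoint_eq_gridPoint_of_forall_notMem (hδ : 0 < δ) {u v : ℝ}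
    (h : ∀ i : Fin m, a + ((i : ℕ) + 1) * δ ∉ Ioo u v) {x y : ℝ} (hx : x ∈ Ioo u v)
    (hy : y ∈ Ioo u v) : gridPoint a δ m x = gridPoint a δ m y := by
  wlog hxy : x ≤ y generalizing x y
  · exact (this hy hx (le_of_not_ge hxy)).symm
  suffices gridIndex a δ m x = gridIndex a δ m y by rw [gridPoint, gridPoint, this]
  by_contra hne
  have hlt := (gridIndex_mono hδ hxy).lt_of_ne hne
  set k := gridIndex a δ m y
  have hk : k ≠ 0 := by omega
  have hkm : k ≤ m := gridIndex_le y
  refine h ⟨k - 1, by omega⟩ ⟨?_, ?_⟩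
  · have := (le_gridIndex_iff (a := a) (x := x) hδ hk hkm).not.1 (by omega)
    rw [Nat.cast_pred (by omega), sub_add_cancel]
    exact hx.1.trans (not_le.1 this)
  · have := (le_gridIndex_iff (a := a) (x := y) hδ hk hkm).1 le_rfl
    rw [Nat.cast_pred (by omega), sub_add_cancel]
    exact this.trans_lt hy.2

variable {g : ℝ → ℝ} {K : ℝ}

theorem gridSawtooth_sub_gridSawtooth (hδ : 0 < δ) {u v : ℝ}
    (h : ∀ i : Fin m, a + ((i : ℕ) + 1) * δ ∉ Ioo u v) {x y : ℝ} (hx : x ∈ Ioo u v)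
    (hy : y ∈ Ioo u v) : gridSawtooth g a δ K m x - gridSawtooth g a δ K m y = K * (x - y) := by
  rw [gridSawtooth, gridSawtooth, gridPoint_eq_gridPoint_of_forall_notMem hδ h hx hy]
  ring

theorem gridSawtooth_eq (hδ : 0 < δ) {k : ℕ} (hkm : k ≤ m) {x : ℝ} (hx₁ : a + k * δ ≤ x)
    (hx₂ : x < a + (k + 1) * δ) :
    gridSawtooth g a δ K m x = g (a + k * δ) + K * (x - (a + k * δ)) := by
  rw [gridSawtooth, gridPoint_eq hδ hkm hx₁ hx₂]

theorem isSawtooth_gridSawtooth (hδ : 0 < δ) (hK : 0 ≤ K)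
    (hjump : ∀ i : Fin m, g (a + ((i : ℕ) + 1) * δ) ≤ g (a + (i : ℕ) * δ) + K * δ) :
    IsSawtooth (Ioo a (a + (m + 1) * δ)) (gridSawtooth g a δ K m)
      (fun i : Fin m => a + ((i : ℕ) + 1) * δ) (fun i : Fin m => g (a + (i : ℕ) * δ) + K * δ)
      (fun i : Fin m => g (a + ((i : ℕ) + 1) * δ)) where
  strictMono i j hij := by
    have : ((i : ℕ) : ℝ) < (j : ℕ) := by exact_mod_cast hij
    simp only; nlinarith
  mem i := by
    have : ((i : ℕ) : ℝ) + 1 ≤ m := by exact_mod_cast i.2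
    constructor <;> nlinarith [(i : ℕ).cast_nonneg (α := ℝ)]
  monotoneOn u v h x hx y hy hxy := by
    have := gridSawtooth_sub_gridSawtooth (g := g) (K := K) hδ h hy hx
    nlinarith
  lipschitzOn u v h := ⟨‖K‖₊, LipschitzOnWith.of_dist_le_mul fun x hx y hy => by
    rw [Real.dist_eq, Real.dist_eq, gridSawtooth_sub_gridSawtooth hδ h hx hy, abs_mul,
      coe_nnnorm, Real.norm_eq_abs]⟩
  tendsto_left i := by
    set p := a + (i : ℕ) * δ
    have hlin : Tendsto (fun x => g p + K * (x - p)) (𝓝[<] (p + δ)) (𝓝 (g p + K * δ)) := by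
      have : Continuous fun x => g p + K * (x - p) := by fun_prop
      simpa using (this.tendsto (p + δ)).mono_left nhdsWithin_le_nhds
    have hp : a + ((i : ℕ) + 1) * δ = p + δ := by ring
    rw [hp]
    refine hlin.congr' ?_
    filter_upwards [Ioo_mem_nhdsLT (show p < p + δ by linarith)] with x hx
    exact (gridSawtooth_eq hδ i.2.le hx.1.le (by linarith [hx.2])).symm
  tendsto_right i := by
    set p := a + ((i : ℕ) + 1) * δ
    have hlin : Tendsto (fun x => g p + K * (x - p)) (𝓝[>] p) (𝓝 (g p)) := by
      have : Continuous fun x => g p + K * (x - p) := by fun_prop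
      simpa using (this.tendsto p).mono_left nhdsWithin_le_nhds
    refine hlin.congr' ?_
    filter_upwards [Ioo_mem_nhdsGT (show p < p + δ by linarith)] with x hx
    have := gridSawtooth_eq (g := g) (K := K) hδ (k := (i : ℕ) + 1) i.2 (x := x)
      (by push_cast; exact hx.1.le) (by push_cast; linarith [hx.2])
    push_cast at this
    exact this.symm
  right_le_left := hjump

theorem abs_sub_gridSawtooth_le (hδ : 0 < δ) (hK : 0 ≤ K) {x : ℝ}
    (hx : x ∈ Icc a (a + (m + 1) * δ)) :
    |g x - gridSawtooth g a δ K m x| ≤ |g x - g (gridPoint a δ m x)| + K * δ := by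
  have h₁ := gridPoint_le_self (m := m) hδ hx.1
  have h₂ := self_le_gridPoint_add hδ hx.2
  calc |g x - gridSawtooth g a δ K m x|
      = |(g x - g (gridPoint a δ m x)) - K * (x - gridPoint a δ m x)| := by
        rw [gridSawtooth]; ring_nf
    _ ≤ |g x - g (gridPoint a δ m x)| + |K * (x - gridPoint a δ m x)| := abs_sub _ _
    _ ≤ |g x - g (gridPoint a δ m x)| + K * δ := by
        rw [abs_of_nonneg (mul_nonneg hK (by linarith))]
        gcongr
        linarith

theorem measurable_gridSawtooth (hg : Measurable g) : Measurable (gridSawtooth g a δ K m) := by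
  have : Measurable (gridPoint a δ m) := by
    unfold gridPoint gridIndex
    fun_prop
  unfold gridSawtooth
  fun_prop

end Grid

theorem Continuous.exists_isSawtooth_abs_sub_le {g : ℝ → ℝ} (hg : Continuous g) {a b : ℝ}
    (hab : a < b) {η : ℝ} (hη : 0 < η) :
    ∃ (F : ℝ → ℝ) (N : ℕ) (xs llim rlim : Fin N → ℝ), IsSawtooth (Ioo a b) F xs llim rlim ∧
      Measurable F ∧ ∀ x ∈ Icc a b, |g x - F x| ≤ η := by
  obtain ⟨δ₀, hδ₀, hg_unif⟩ := Metric.uniformContinuousOn_iff.1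
    (isCompact_Icc.uniformContinuousOn_of_continuous hg.continuousOn) (η / 2) (half_pos hη)
  obtain ⟨m, hm⟩ := exists_nat_gt ((b - a) / δ₀)
  set δ := (b - a) / (m + 1)
  have hδ : 0 < δ := div_pos (by linarith) (by positivity)
  have hmδ : a + (m + 1) * δ = b := by simp only [δ]; field_simp; ring
  have hδδ₀ : δ < δ₀ := by
    rw [div_lt_iff₀ (by positivity)]
    rw [div_lt_iff₀ hδ₀] at hm
    nlinarith
  set K := η / 2 / δ
  have hK : 0 ≤ K := by positivity
  have hKδ : K * δ = η / 2 := div_mul_cancel₀ _ hδ.ne'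
  have hclose : ∀ x ∈ Icc a b, ∀ y ∈ Icc a b, |x - y| ≤ δ → |g x - g y| < η / 2 :=
    fun x hx y hy hxy => by
      simpa only [Real.dist_eq] using hg_unif x hx y hy (by rw [Real.dist_eq]; linarith)
  have hgrid : ∀ k ≤ m, a + k * δ ∈ Icc a b := fun k hk => by
    have : (k : ℝ) ≤ m := by exact_mod_cast hk
    constructor <;> nlinarith [k.cast_nonneg (α := ℝ)]
  have hsaw := isSawtooth_gridSawtooth (g := g) (a := a) (m := m) hδ hK fun i => by
    have hstep : |a + ((i : ℕ) + 1) * δ - (a + (i : ℕ) * δ)| ≤ δ := by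
      rw [show a + ((i : ℕ) + 1) * δ - (a + (i : ℕ) * δ) = δ by ring, abs_of_pos hδ]
    have := hclose _ (by exact_mod_cast hgrid (i + 1) i.2) _ (hgrid i i.2.le) hstep
    linarith [(abs_lt.1 this).2]
  rw [hmδ] at hsaw
  refine ⟨_, _, _, _, _, hsaw, measurable_gridSawtooth hg.measurable, fun x hx => ?_⟩
  have hx' : x ∈ Icc a (a + (m + 1) * δ) := hmδ ▸ hx
  have hp := gridPoint_mem_Icc (a := a) (m := m) hδ x
  have := hclose x hx _ ⟨hp.1, by nlinarith [hp.2]⟩ (by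
    rw [abs_of_nonneg (by linarith [gridPoint_le_self (m := m) hδ hx.1])]
    linarith [self_le_gridPoint_add hδ hx'.2])
  linarith [abs_sub_gridSawtooth_le (g := g) hδ hK hx']

theorem exists_pos_eLpNorm_lt_of_ae_norm_le {α E : Type*} [MeasurableSpace α]
    [NormedAddCommGroup E] (μ : Measure α) [IsFiniteMeasure μ] (p : ℝ≥0∞) {ε : ℝ≥0∞}
    (hε : ε ≠ 0) :
    ∃ η : ℝ, 0 < η ∧ ∀ u : α → E, (∀ᵐ x ∂μ, ‖u x‖ ≤ η) → eLpNorm u p μ < ε := by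
  have hA : μ univ ^ p.toReal⁻¹ ≠ ∞ :=
    ENNReal.rpow_ne_top_of_nonneg (inv_nonneg.2 ENNReal.toReal_nonneg) (measure_ne_top μ univ)
  obtain ⟨η, hη, hηA⟩ := ENNReal.exists_nnreal_pos_mul_lt hA hε
  refine ⟨η, hη, fun u hu => (eLpNorm_le_of_ae_bound hu).trans_lt ?_⟩
  rwa [ENNReal.ofReal_coe_nnreal, mul_comm]

theorem exists_monotone_clamp {α : Type*} [MeasurableSpace α] (μ : Measure α) [NeZero μ]
    (f : α → ℝ) :
    ∃ c : ℝ → ℝ, Monotone c ∧ LipschitzWith 1 c ∧ (∀ᵐ x ∂μ, ∀ y, |f x - c y| ≤ |f x - y|) ∧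
      ∀ C, (∀ᵐ x ∂μ, |f x| ≤ C) → ∀ y, |c y| ≤ C := by
  by_cases hbdd : ∃ C, ∀ᵐ x ∂μ, |f x| ≤ C
  · set C₀ := essSup (fun x => |f x|) μ
    have hC₀ : ∀ᵐ x ∂μ, |f x| ≤ C₀ := ae_le_essSup hbdd
    have hC₀_le : ∀ C, (∀ᵐ x ∂μ, |f x| ≤ C) → C₀ ≤ C := fun C hC =>
      essSup_le_of_ae_le C hC (isCoboundedUnder_le_of_le (ae μ) fun x => abs_nonneg (f x))
    have hC₀_nonneg : 0 ≤ C₀ := by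
      obtain ⟨x, hx⟩ := hC₀.exists
      exact (abs_nonneg _).trans hx
    have hI : -C₀ ≤ C₀ := by linarith
    let c : ℝ → ℝ := fun y => projIcc (-C₀) C₀ hI y
    have hcL : LipschitzWith 1 c :=
      mul_one (1 : ℝ≥0) ▸ (LipschitzWith.subtype_val _).comp (LipschitzWith.projIcc hI)
    refine ⟨c, fun y z hyz => monotone_projIcc hI hyz, hcL, ?_, fun C hC y => ?_⟩
    · filter_upwards [hC₀] with x hx y
      have hcx : c (f x) = f x := by simp [c, projIcc_of_mem hI (abs_le.1 hx)]
      simpa [hcx, Real.dist_eq] using hcL.dist_le_mul (f x) y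
    · exact (abs_le.2 (projIcc (-C₀) C₀ hI y).2).trans (hC₀_le C hC)
  · exact ⟨id, monotone_id, LipschitzWith.id, .of_forall fun _ _ => le_rfl,
      fun C hC => absurd ⟨C, hC⟩ hbdd⟩

theorem stmt_18 (M ε : ℝ) (hM : 0 < M) (hε : 0 < ε)
    (f : ℝ → ℝ)
    (hf : MemLp f 2 (volume.restrict (Set.Icc (-M) M))) :
    ∃ (fε : ℝ → ℝ) (N : ℕ) (xs : Fin N → ℝ) (llim rlim : Fin N → ℝ),
      StrictMono xs ∧
      (∀ i, xs i ∈ Set.Ioo (-M) M) ∧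
      (∀ a b : ℝ, a < b → (∀ i, xs i ∉ Set.Ioo a b) →
        MonotoneOn fε (Set.Ioo a b) ∧ ∃ L, LipschitzOnWith L fε (Set.Ioo a b)) ∧
      (∀ i, Filter.Tendsto fε (nhdsWithin (xs i) (Set.Iio (xs i))) (nhds (llim i)) ∧
            Filter.Tendsto fε (nhdsWithin (xs i) (Set.Ioi (xs i))) (nhds (rlim i)) ∧
            rlim i ≤ llim i) ∧
      eLpNorm (fun x => f x - fε x) 2 (volume.restrict (Set.Icc (-M) M)) <
        ENNReal.ofReal ε ∧
      (∀ C : ℝ, (∀ᵐ x ∂volume.restrict (Set.Icc (-M) M), |f x| ≤ C) →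
        ∀ x : ℝ, |fε x| ≤ C) := by
  set μ := volume.restrict (Icc (-M) M)
  have hε₂ : ENNReal.ofReal ε / 2 ≠ 0 := by simp [hε]
  have hε₂_top : ENNReal.ofReal ε / 2 ≠ ∞ := ENNReal.div_ne_top ENNReal.ofReal_ne_top two_ne_zero
  have : NeZero μ := ⟨by simp [μ, hM]⟩
  obtain ⟨g, hfg, -⟩ := hf.exists_boundedContinuous_eLpNorm_sub_le (by norm_num) hε₂
  obtain ⟨η, hη, hsmall⟩ := exists_pos_eLpNorm_lt_of_ae_norm_le (E := ℝ) μ 2 hε₂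
  obtain ⟨F, N, xs, llim, rlim, hF, hF_meas, hgF⟩ :=
    g.continuous.exists_isSawtooth_abs_sub_le (neg_lt_self hM) hη
  obtain ⟨c, hc_mono, hc_lip, hc_proj, hc_bound⟩ := exists_monotone_clamp μ f
  have hcF := hF.comp hc_mono hc_lip
  refine ⟨c ∘ F, N, xs, c ∘ llim, c ∘ rlim, hcF.strictMono, hcF.mem,
    fun u v _ h => ⟨hcF.monotoneOn u v h, hcF.lipschitzOn u v h⟩,
    fun i => ⟨hcF.tendsto_left i, hcF.tendsto_right i, hcF.right_le_left i⟩, ?_,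
    fun C hC x => hc_bound C hC (F x)⟩
  have hgF_small : eLpNorm (⇑g - F) 2 μ < ENNReal.ofReal ε / 2 :=
    hsmall _ (by
      filter_upwards [ae_restrict_mem measurableSet_Icc] with x hx
      exact hgF x hx)
  calc eLpNorm (fun x => f x - (c ∘ F) x) 2 μ
      ≤ eLpNorm (f - F) 2 μ := eLpNorm_mono_ae (by
        filter_upwards [hc_proj] with x hx
        exact hx (F x))
    _ = eLpNorm ((f - ⇑g) + (⇑g - F)) 2 μ := by rw [sub_add_sub_cancel]
    _ ≤ eLpNorm (f - ⇑g) 2 μ + eLpNorm (⇑g - F) 2 μ :=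
        eLpNorm_add_le (hf.1.sub g.continuous.aestronglyMeasurable)
          (g.continuous.aestronglyMeasurable.sub hF_meas.aestronglyMeasurable) one_le_two
    _ < ENNReal.ofReal ε / 2 + ENNReal.ofReal ε / 2 :=
        ENNReal.add_lt_add_of_le_of_lt (ne_top_of_le_ne_top hε₂_top hfg) hfg hgF_small
    _ = ENNReal.ofReal ε := ENNReal.add_halves _
end
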